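/- Let (τ(t))_{t ∈ T} be i.i.d. symmetric Bernoulli (±1 with probability 1/2) random variables independent of the Bernoulli sampling variables δ₁,…,δ_N, and for each t₀ ∈ T^c define (on the event that M_Ω* M_Ω is invertible) π(t₀) = ⟨w⁰, τ⟩, where w⁰ = (M_Ω* M_Ω)^{−1} v⁰ and v⁰ = Σ_{k=1}^N δ_k λ_k⁰ x_k with λ_k⁰ the (k, t₀) entry of [Φ Ψ]. Then for every λ > 0, P( sup_{t ∈ T^c} |π(t)| ≥ 1 ) ≤ 2(n₁+n₂) e^{−1/(2λ²)} + P( sup_{t₀ ∈ T^c} ‖w⁰‖ ≥ λ ). -/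

import Mathlib

open Matrix ComplexConjugate

noncomputable section

/-- Spectral norm (largest singular value) of a complex matrix. -/
def specNorm {p q : Type*} [Fintype p] [Fintype q] [DecidableEq q] (A : Matrix p q ℂ) : ℝ :=
  ‖LinearMap.toContinuousLinearMap (Matrix.toEuclideanLin A)‖

/-- Euclidean norm of a vector. -/
def vecNorm {p : Type*} [Fintype p] (v : p → ℂ) : ℝ :=
  Real.sqrt (∑ i, ‖v i‖ ^ 2)

/-- Euclidean inner product `⟨u, v⟩ = ∑ conj(u_i) v_i`. -/
def cInner {p : Type*} [Fintype p] (u v : p → ℂ) : ℂ := ∑ i, conj (u i) * v i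

/-- Mutual coherence `μ(Φ,Ψ) = max_{i,j} |⟨Φ_i, Ψ_j⟩| / (‖Φ_i‖ ‖Ψ_j‖)` over columns. -/
def mutualCoherence {N n₁ n₂ : ℕ} (Φ : Matrix (Fin N) (Fin n₁) ℂ)
    (Ψ : Matrix (Fin N) (Fin n₂) ℂ) : ℝ :=
  ⨆ i : Fin n₁, ⨆ j : Fin n₂,
    ‖cInner (fun k => Φ k i) (fun k => Ψ k j)‖ /
      (vecNorm (fun k => Φ k i) * vecNorm (fun k => Ψ k j))

/-- `μ_M = max{μ_Φ, μ_Ψ}`: the largest entry magnitude of the two matrices. -/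
def muMax {N n₁ n₂ : ℕ} (Φ : Matrix (Fin N) (Fin n₁) ℂ)
    (Ψ : Matrix (Fin N) (Fin n₂) ℂ) : ℝ :=
  max (⨆ k, ⨆ i, ‖Φ k i‖) (⨆ k, ⨆ j, ‖Ψ k j‖)

/-- `x_k`: the `k`-th row of `[Φ_{T₁} Ψ_{T₂}]`, indexed by `↥T₁ ⊕ ↥T₂`. -/
def rowT {N n₁ n₂ : ℕ} (Φ : Matrix (Fin N) (Fin n₁) ℂ) (Ψ : Matrix (Fin N) (Fin n₂) ℂ)
    (T₁ : Finset (Fin n₁)) (T₂ : Finset (Fin n₂)) (k : Fin N) : (↥T₁ ⊕ ↥T₂) → ℂ :=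
  Sum.elim (fun t => Φ k t) (fun t => Ψ k t)

/-- `F = [[I, Φ_{T₁}*Ψ_{T₂}/N],[Ψ_{T₂}*Φ_{T₁}/N, I]] = (1/N) ∑_k x_k x_k*`. -/
def Fmat {N n₁ n₂ : ℕ} (Φ : Matrix (Fin N) (Fin n₁) ℂ) (Ψ : Matrix (Fin N) (Fin n₂) ℂ)
    (T₁ : Finset (Fin n₁)) (T₂ : Finset (Fin n₂)) : Matrix (↥T₁ ⊕ ↥T₂) (↥T₁ ⊕ ↥T₂) ℂ :=
  Matrix.of fun i j =>
    (N : ℂ)⁻¹ * ∑ k, conj (rowT Φ Ψ T₁ T₂ k i) * rowT Φ Ψ T₁ T₂ k j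

/-- `M_Ω* M_Ω = ∑_{k ∈ Ω} x_k x_k*` where `Ω = {k : δ_k = 1}` is encoded by `b : Fin N → Bool`. -/
def gram {N n₁ n₂ : ℕ} (Φ : Matrix (Fin N) (Fin n₁) ℂ) (Ψ : Matrix (Fin N) (Fin n₂) ℂ)
    (T₁ : Finset (Fin n₁)) (T₂ : Finset (Fin n₂)) (b : Fin N → Bool) :
    Matrix (↥T₁ ⊕ ↥T₂) (↥T₁ ⊕ ↥T₂) ℂ :=
  Matrix.of fun i j =>
    ∑ k, (if b k then (1 : ℂ) else 0) * (conj (rowT Φ Ψ T₁ T₂ k i) * rowT Φ Ψ T₁ T₂ k j)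

/-- Weight of the configuration `b` under the i.i.d. Bernoulli(`p`) model on `{0,1}^N`. -/
def bernWeight (N : ℕ) (p : ℝ) (b : Fin N → Bool) : ℝ :=
  ∏ k, if b k then p else 1 - p

/-- Probability of an event under the i.i.d. Bernoulli(`p`) model on `{0,1}^N`. -/
def bernProb (N : ℕ) (p : ℝ) (E : (Fin N → Bool) → Prop) : ℝ :=
  ∑ b : Fin N → Bool, Set.indicator {b | E b} (bernWeight N p) b

/-- Expectation under the i.i.d. Bernoulli(`p`) model on `{0,1}^N`. -/
def bernExp (N : ℕ) (p : ℝ) (f : (Fin N → Bool) → ℝ) : ℝ :=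
  ∑ b : Fin N → Bool, bernWeight N p b * f b

/-- The spectral norm of the block `Φ_{T₁}* Ψ_{T₂} / N`. -/
def blockNorm {N n₁ n₂ : ℕ} (Φ : Matrix (Fin N) (Fin n₁) ℂ) (Ψ : Matrix (Fin N) (Fin n₂) ℂ)
    (T₁ : Finset (Fin n₁)) (T₂ : Finset (Fin n₂)) : ℝ :=
  specNorm (Matrix.of fun (t₁ : ↥T₁) (t₂ : ↥T₂) =>
    (N : ℂ)⁻¹ * cInner (fun k => Φ k (t₁ : Fin n₁)) (fun k => Ψ k (t₂ : Fin n₂)))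

end

noncomputable section

/-- `λ_k⁰`: the `(k, t₀)` entry of `[Φ Ψ]`. -/
def lamEntry {N n₁ n₂ : ℕ} (Φ : Matrix (Fin N) (Fin n₁) ℂ) (Ψ : Matrix (Fin N) (Fin n₂) ℂ)
    (t₀ : Fin n₁ ⊕ Fin n₂) (k : Fin N) : ℂ :=
  Sum.elim (Φ k) (Ψ k) t₀

/-- `v⁰ = ∑_k δ_k λ_k⁰ x_k` under the Bernoulli configuration `b`. -/
def vZero {N n₁ n₂ : ℕ} (Φ : Matrix (Fin N) (Fin n₁) ℂ) (Ψ : Matrix (Fin N) (Fin n₂) ℂ)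
    (T₁ : Finset (Fin n₁)) (T₂ : Finset (Fin n₂)) (t₀ : Fin n₁ ⊕ Fin n₂)
    (b : Fin N → Bool) : (↥T₁ ⊕ ↥T₂) → ℂ :=
  fun i => ∑ k, (if b k then (1 : ℂ) else 0) * (lamEntry Φ Ψ t₀ k * rowT Φ Ψ T₁ T₂ k i)

/-- `w⁰ = (M_Ω* M_Ω)⁻¹ v⁰` (junk value when the Gram matrix is not invertible). -/
def wZero {N n₁ n₂ : ℕ} (Φ : Matrix (Fin N) (Fin n₁) ℂ) (Ψ : Matrix (Fin N) (Fin n₂) ℂ)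
    (T₁ : Finset (Fin n₁)) (T₂ : Finset (Fin n₂)) (t₀ : Fin n₁ ⊕ Fin n₂)
    (b : Fin N → Bool) : (↥T₁ ⊕ ↥T₂) → ℂ :=
  (gram Φ Ψ T₁ T₂ b)⁻¹.mulVec (vZero Φ Ψ T₁ T₂ t₀ b)

/-- Probability of an event for the Bernoulli(`p`) sampling variables together with independent
uniform ±1 signs indexed by `ι` (encoded by `Bool`). -/
def bernSignProb (N : ℕ) (p : ℝ) {ι : Type*} [Fintype ι] [DecidableEq ι]
    (E : (Fin N → Bool) × (ι → Bool) → Prop) : ℝ :=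
  ∑ q : (Fin N → Bool) × (ι → Bool),
    Set.indicator {q | E q}
      (fun q => bernWeight N p q.1 * (1 / 2) ^ (Fintype.card ι)) q

end

/-!
Conditionally on the sampling `b`, `π(t₀) = ⟨w⁰, τ⟩` is a Rademacher sum `Z = ∑ₜ wₜ τₜ` with
complex coefficients. Rotating `w` by a unit scalar (which changes neither `|Z|` nor `‖w‖`) makes
`∑ₜ Re wₜ · Im wₜ = 0`; then `Re Z ± Im Z` are real Rademacher sums whose coefficient vectors
both have norm `‖w‖`. Convexity of `u ↦ cosh √u` gives `e^s ≤ cosh (s (Re Z + Im Z)) +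
cosh (s (Re Z - Im Z))` on `{|Z| ≥ 1}`, so Chernoff's bound with `s = 1/λ²` yields
`P_τ(|Z| ≥ 1) ≤ 2 e^{-1/(2λ²)}` whenever `‖w‖ ≤ λ`. A union bound over `t₀ ∈ Tᶜ` on the event
`sup ‖w⁰‖ < λ`, plus the probability of its complement, gives the theorem.
-/

open Real Finset

section RealInequalities

open Set

lemma Real.sinh_le_mul_cosh {t : ℝ} (ht : 0 ≤ t) : sinh t ≤ t * cosh t := by
  have h := (convex_Icc 0 t).image_sub_le_mul_sub_of_deriv_le continuous_sinh.continuousOn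
    differentiable_sinh.differentiableOn (C := cosh t) (fun x hx => by
      rw [interior_Icc] at hx
      rw [Real.deriv_sinh, cosh_le_cosh, abs_of_pos hx.1, abs_of_nonneg ht]
      exact hx.2.le) 0 (left_mem_Icc.2 ht) t (right_mem_Icc.2 ht) ht
  simpa [mul_comm] using h

lemma Real.monotoneOn_sinh_div_self : MonotoneOn (fun t => sinh t / t) (Ioi 0) := by
  have hderiv : ∀ t ∈ Ioi (0 : ℝ),
      HasDerivAt (fun t => sinh t / t) ((cosh t * t - sinh t * 1) / t ^ 2) t :=
    fun t ht => (hasDerivAt_sinh t).div (hasDerivAt_id t) (ne_of_gt ht)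
  refine monotoneOn_of_deriv_nonneg (convex_Ioi 0)
    (fun t ht => (hderiv t ht).continuousAt.continuousWithinAt)
    (fun t ht => (hderiv t (interior_subset ht)).differentiableAt.differentiableWithinAt)
    fun t ht => ?_
  rw [interior_Ioi] at ht
  rw [(hderiv t ht).deriv]
  have := sinh_le_mul_cosh (le_of_lt ht)
  exact div_nonneg (by linarith) (sq_nonneg t)

lemma Real.convexOn_cosh_sqrt : ConvexOn ℝ (Ici 0) (fun u => cosh (√u)) := by
  have hderiv : ∀ u ∈ Ioi (0 : ℝ),
      HasDerivAt (fun u => cosh (√u)) (sinh √u / √u / 2) u := fun u hu =>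
    ((hasDerivAt_cosh √u).comp u (hasDerivAt_sqrt (ne_of_gt hu))).congr_deriv (by ring)
  refine MonotoneOn.convexOn_of_deriv (convex_Ici 0)
    (continuous_cosh.comp continuous_sqrt).continuousOn
    (fun u hu => (hderiv u (by simpa using hu)).differentiableAt.differentiableWithinAt) ?_
  rw [interior_Ici]
  intro a ha b hb hab
  rw [(hderiv a ha).deriv, (hderiv b hb).deriv]
  gcongr ?_ / 2
  exact monotoneOn_sinh_div_self (sqrt_pos.2 ha) (sqrt_pos.2 hb) (sqrt_le_sqrt hab)

lemma Real.two_mul_cosh_sqrt_le (u v : ℝ) :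
    2 * cosh √(u ^ 2 + v ^ 2) ≤ cosh (u + v) + cosh (u - v) := by
  have h := convexOn_cosh_sqrt.2 (mem_Ici.2 (sq_nonneg (u + v))) (mem_Ici.2 (sq_nonneg (u - v)))
    (by norm_num : (0 : ℝ) ≤ 1 / 2) (by norm_num : (0 : ℝ) ≤ 1 / 2) (by norm_num)
  simp only [smul_eq_mul] at h
  rw [sqrt_sq_eq_abs, sqrt_sq_eq_abs, cosh_abs, cosh_abs,
    show 1 / 2 * (u + v) ^ 2 + 1 / 2 * (u - v) ^ 2 = u ^ 2 + v ^ 2 by ring] at h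
  linarith

end RealInequalities

lemma Real.exp_le_cosh_add_cosh_of_one_le_norm {z : ℂ} (hz : 1 ≤ ‖z‖) {s : ℝ} (hs : 0 ≤ s) :
    exp s ≤ cosh (s * z.re + s * z.im) + cosh (s * z.re - s * z.im) := by
  have hscale : s ≤ √((s * z.re) ^ 2 + (s * z.im) ^ 2) := by
    rw [show (s * z.re) ^ 2 + (s * z.im) ^ 2 = s ^ 2 * (z.re ^ 2 + z.im ^ 2) by ring,
      sqrt_mul (sq_nonneg s), sqrt_sq hs, ← Complex.norm_eq_sqrt_sq_add_sq]
    nlinarith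
  have hcosh : cosh s ≤ cosh √((s * z.re) ^ 2 + (s * z.im) ^ 2) := by
    rwa [cosh_le_cosh, abs_of_nonneg hs, abs_of_nonneg (sqrt_nonneg _)]
  have hexp : exp s ≤ 2 * cosh s := by
    rw [cosh_eq]
    linarith [exp_pos (-s)]
  linarith [two_mul_cosh_sqrt_le (s * z.re) (s * z.im)]

lemma Complex.exists_norm_eq_one_im_sq_mul_eq_zero (z : ℂ) :
    ∃ ω : ℂ, ‖ω‖ = 1 ∧ (ω ^ 2 * z).im = 0 := by
  refine ⟨Complex.exp (↑(-(z.arg / 2)) * Complex.I), Complex.norm_exp_ofReal_mul_I _, ?_⟩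
  nth_rw 2 [← Complex.norm_mul_exp_arg_mul_I z]
  rw [← Complex.exp_nat_mul, mul_left_comm, ← Complex.exp_add]
  push_cast
  ring_nf
  simp

lemma Complex.exists_norm_eq_one_sum_re_mul_im_eq_zero {ι : Type*} [Fintype ι] (w : ι → ℂ) :
    ∃ ω : ℂ, ‖ω‖ = 1 ∧ ∑ t, (ω * w t).re * (ω * w t).im = 0 := by
  obtain ⟨ω, hω, him⟩ := exists_norm_eq_one_im_sq_mul_eq_zero (∑ t, w t ^ 2)
  refine ⟨ω, hω, ?_⟩
  have hsq : ∀ u : ℂ, u.re * u.im = (u ^ 2).im / 2 := fun u => by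
    simp only [sq, mul_im]
    ring
  simp only [hsq, ← sum_div, ← im_sum, mul_sum, mul_pow] at him ⊢
  rw [him, zero_div]

lemma Complex.sum_sq_re_add_mul_im {ι : Type*} [Fintype ι] {u : ι → ℂ}
    (horth : ∑ t, (u t).re * (u t).im = 0) {c : ℝ} (hc : c ^ 2 = 1) :
    ∑ t, ((u t).re + c * (u t).im) ^ 2 = ∑ t, ‖u t‖ ^ 2 := by
  have hexpand : ∀ t, ((u t).re + c * (u t).im) ^ 2 = ‖u t‖ ^ 2 + 2 * c * ((u t).re * (u t).im) :=
    fun t => by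
      rw [norm_eq_sqrt_sq_add_sq, sq_sqrt (by positivity)]
      linear_combination (u t).im ^ 2 * hc
  rw [sum_congr rfl fun t _ => hexpand t, sum_add_distrib, ← mul_sum, horth, mul_zero, add_zero]

lemma Complex.re_sum_mul_sign {ι : Type*} [Fintype ι] (u : ι → ℂ) (τ : ι → Bool) :
    (∑ t, u t * (if τ t then 1 else -1)).re = ∑ t, (if τ t then 1 else -1) * (u t).re := by
  rw [re_sum]
  exact sum_congr rfl fun t _ => by split_ifs <;> simp

lemma Complex.im_sum_mul_sign {ι : Type*} [Fintype ι] (u : ι → ℂ) (τ : ι → Bool) :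
    (∑ t, u t * (if τ t then 1 else -1)).im = ∑ t, (if τ t then 1 else -1) * (u t).im := by
  rw [im_sum]
  exact sum_congr rfl fun t _ => by split_ifs <;> simp

section Signs

variable {ι : Type*} [Fintype ι] [DecidableEq ι]

noncomputable def signExp (f : (ι → Bool) → ℝ) : ℝ :=
  ∑ τ, (1 / 2 : ℝ) ^ Fintype.card ι * f τ

noncomputable def signProb (E : (ι → Bool) → Prop) : ℝ :=
  signExp ({τ | E τ}.indicator 1)

lemma signExp_mono {f g : (ι → Bool) → ℝ} (h : ∀ τ, f τ ≤ g τ) : signExp f ≤ signExp g :=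
  sum_le_sum fun τ _ => by gcongr; exact h τ

lemma signExp_const (c : ℝ) : signExp (fun _ : ι → Bool => c) = c := by
  simp only [signExp, sum_const, card_univ, Fintype.card_fun, Fintype.card_bool, nsmul_eq_mul]
  push_cast
  rw [← mul_assoc, ← mul_pow]
  norm_num

lemma signExp_add (f g : (ι → Bool) → ℝ) :
    signExp (fun τ => f τ + g τ) = signExp f + signExp g := by
  simp only [signExp, mul_add, sum_add_distrib]

lemma signExp_const_mul (c : ℝ) (f : (ι → Bool) → ℝ) :
    signExp (fun τ => c * f τ) = c * signExp f := by
  simp only [signExp, mul_sum]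
  exact sum_congr rfl fun τ _ => by ring

lemma signExp_sum {α : Type*} (s : Finset α) (f : α → (ι → Bool) → ℝ) :
    signExp (fun τ => ∑ a ∈ s, f a τ) = ∑ a ∈ s, signExp (f a) := by
  simp only [signExp, mul_sum]
  exact sum_comm

lemma signProb_le_one (E : (ι → Bool) → Prop) : signProb E ≤ 1 :=
  (signExp_mono fun τ => Set.indicator_le_self' (fun _ _ => zero_le_one) τ).trans
    (signExp_const 1).le

lemma signProb_exists_le_sum {α : Type*} (s : Finset α) (E : α → (ι → Bool) → Prop) :
    signProb (fun τ => ∃ a ∈ s, E a τ) ≤ ∑ a ∈ s, signProb (E a) := by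
  simp only [signProb]
  rw [← signExp_sum]
  refine signExp_mono fun τ => ?_
  have hnonneg : ∀ a ∈ s, (0 : ℝ) ≤ {τ | E a τ}.indicator 1 τ :=
    fun a _ => Set.indicator_nonneg (fun _ _ => zero_le_one) τ
  by_cases h : ∃ a ∈ s, E a τ
  · obtain ⟨a, ha, hE⟩ := h
    calc {τ | ∃ a ∈ s, E a τ}.indicator 1 τ = {τ | E a τ}.indicator (1 : (ι → Bool) → ℝ) τ := by
          rw [Set.indicator_of_mem (s := {τ | E a τ}) hE,
            Set.indicator_of_mem (s := {τ | ∃ a ∈ s, E a τ}) ⟨a, ha, hE⟩]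
      _ ≤ _ := single_le_sum hnonneg ha
  · rw [Set.indicator_of_notMem (by simpa using h)]
    exact sum_nonneg hnonneg

lemma signExp_exp_sum_mul_sign (c : ι → ℝ) :
    signExp (fun τ => exp (∑ t, (if τ t then 1 else -1) * c t)) = ∏ t, cosh (c t) := by
  have hsplit : ∀ τ : ι → Bool, (1 / 2 : ℝ) ^ Fintype.card ι *
      exp (∑ t, (if τ t then 1 else -1) * c t) =
        ∏ t, (1 / 2 * exp ((if τ t then 1 else -1) * c t)) := fun τ => by
    rw [prod_mul_distrib, prod_const, card_univ, exp_sum]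
  simp only [signExp, hsplit]
  rw [← Fintype.prod_sum (fun t (j : Bool) => 1 / 2 * exp ((if j then 1 else -1) * c t))]
  refine prod_congr rfl fun t _ => ?_
  simp only [Fintype.sum_bool, cosh_eq, Bool.false_eq_true, if_true, if_false]
  ring_nf

lemma signExp_cosh_sum_mul_sign_le (c : ι → ℝ) :
    signExp (fun τ => cosh (∑ t, (if τ t then 1 else -1) * c t)) ≤ exp ((∑ t, c t ^ 2) / 2) := by
  have hcosh : ∀ τ : ι → Bool, cosh (∑ t, (if τ t then 1 else -1) * c t) =
      1 / 2 * exp (∑ t, (if τ t then 1 else -1) * c t) +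
        1 / 2 * exp (∑ t, (if τ t then 1 else -1) * -c t) := fun τ => by
    simp only [cosh_eq, mul_neg, sum_neg_distrib]
    ring
  simp only [hcosh, signExp_add, signExp_const_mul, signExp_exp_sum_mul_sign, cosh_neg]
  calc 1 / 2 * ∏ t, cosh (c t) + 1 / 2 * ∏ t, cosh (c t) = ∏ t, cosh (c t) := by ring
    _ ≤ ∏ t, exp (c t ^ 2 / 2) :=
      prod_le_prod (fun t _ => (cosh_pos _).le) fun t _ => cosh_le_exp_half_sq _
    _ = exp ((∑ t, c t ^ 2) / 2) := by rw [← exp_sum, sum_div]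

lemma signProb_one_le_norm_sum_mul_sign_le_of_orthogonal (u : ι → ℂ)
    (horth : ∑ t, (u t).re * (u t).im = 0) {lam : ℝ} (hlam : 0 < lam) (hu : vecNorm u ≤ lam) :
    signProb (fun τ => 1 ≤ ‖∑ t, u t * (if τ t then 1 else -1)‖) ≤
      2 * exp (-(1 / (2 * lam ^ 2))) := by
  set s := 1 / lam ^ 2 with hs
  have hs0 : 0 ≤ s := by positivity
  set c : ℝ → ι → ℝ := fun κ t => s * ((u t).re + κ * (u t).im)
  have hc : ∀ κ : ℝ, κ ^ 2 = 1 → ∑ t, c κ t ^ 2 = s ^ 2 * vecNorm u ^ 2 := fun κ hκ => by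
    simp only [c, mul_pow, ← mul_sum, Complex.sum_sq_re_add_mul_im horth hκ, vecNorm,
      sq_sqrt (sum_nonneg fun t _ => sq_nonneg ‖u t‖)]
  have hsum : ∀ (κ : ℝ) (τ : ι → Bool), ∑ t, (if τ t then 1 else -1) * c κ t =
      s * (∑ t, u t * (if τ t then 1 else -1)).re +
        κ * (s * (∑ t, u t * (if τ t then 1 else -1)).im) := fun κ τ => by
    rw [Complex.re_sum_mul_sign, Complex.im_sum_mul_sign, mul_sum, mul_sum, mul_sum,
      ← sum_add_distrib]
    exact sum_congr rfl fun t _ => by ring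
  have hpt : ∀ τ : ι → Bool, {τ | 1 ≤ ‖∑ t, u t * (if τ t then 1 else -1)‖}.indicator 1 τ ≤
      exp (-s) * (cosh (∑ t, (if τ t then 1 else -1) * c 1 t) +
        cosh (∑ t, (if τ t then 1 else -1) * c (-1) t)) := fun τ => by
    by_cases hτ : 1 ≤ ‖∑ t, u t * (if τ t then 1 else -1)‖
    · simp only [Set.indicator_apply, Set.mem_ofPred_eq, hτ, if_true, Pi.one_apply, hsum,
        one_mul, neg_one_mul, ← sub_eq_add_neg]
      calc (1 : ℝ) = exp (-s) * exp s := by rw [← exp_add, neg_add_cancel, exp_zero]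
        _ ≤ _ := by gcongr; exact exp_le_cosh_add_cosh_of_one_le_norm hτ hs0
    · rw [Set.indicator_of_notMem (by simpa using hτ)]
      positivity
  have hσ : vecNorm u ^ 2 ≤ lam ^ 2 := pow_le_pow_left₀ (sqrt_nonneg _) hu 2
  calc signProb _ ≤ signExp (fun τ => exp (-s) * (cosh (∑ t, (if τ t then 1 else -1) * c 1 t) +
        cosh (∑ t, (if τ t then 1 else -1) * c (-1) t))) := signExp_mono hpt
    _ ≤ exp (-s) * (exp ((∑ t, c 1 t ^ 2) / 2) + exp ((∑ t, c (-1) t ^ 2) / 2)) := by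
      rw [signExp_const_mul, signExp_add]
      gcongr <;> exact signExp_cosh_sum_mul_sign_le _
    _ = 2 * exp (-s + s ^ 2 * vecNorm u ^ 2 / 2) := by
      rw [hc 1 (one_pow 2), hc (-1) (by norm_num), exp_add]
      ring
    _ ≤ 2 * exp (-(1 / (2 * lam ^ 2))) := by
      gcongr
      calc -s + s ^ 2 * vecNorm u ^ 2 / 2 ≤ -s + s ^ 2 * lam ^ 2 / 2 := by gcongr
        _ = -(1 / (2 * lam ^ 2)) := by rw [hs]; field_simp; ring

theorem signProb_one_le_norm_sum_mul_sign_le (w : ι → ℂ) {lam : ℝ} (hlam : 0 < lam)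
    (hw : vecNorm w ≤ lam) :
    signProb (fun τ => 1 ≤ ‖∑ t, w t * (if τ t then 1 else -1)‖) ≤
      2 * exp (-(1 / (2 * lam ^ 2))) := by
  obtain ⟨ω, hω, horth⟩ := Complex.exists_norm_eq_one_sum_re_mul_im_eq_zero w
  have hnorm : ∀ τ : ι → Bool, ‖∑ t, ω * w t * (if τ t then 1 else -1)‖ =
      ‖∑ t, w t * (if τ t then 1 else -1)‖ := fun τ => by
    simp only [mul_assoc, ← mul_sum, norm_mul, hω, one_mul]
  have hvec : vecNorm (fun t => ω * w t) = vecNorm w := by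
    simp only [vecNorm, norm_mul, hω, one_mul]
  simpa only [hnorm] using
    signProb_one_le_norm_sum_mul_sign_le_of_orthogonal _ horth hlam (hvec ▸ hw)

end Signs

section Bernoulli

variable {N : ℕ} {p : ℝ}

lemma bernWeight_nonneg (hp0 : 0 ≤ p) (hp1 : p ≤ 1) (b : Fin N → Bool) :
    0 ≤ bernWeight N p b :=
  prod_nonneg fun k _ => by split_ifs <;> linarith

lemma sum_bernWeight : ∑ b : Fin N → Bool, bernWeight N p b = 1 := by
  calc ∑ b, bernWeight N p b = ∏ _k : Fin N, ∑ j : Bool, (if j then p else 1 - p) :=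
        (Fintype.prod_sum fun _ (j : Bool) => if j then p else 1 - p).symm
    _ = 1 := by simp only [Fintype.sum_bool, if_true, Bool.false_eq_true, if_false,
        add_sub_cancel, prod_const_one]

lemma bernSignProb_eq_sum_bernWeight_mul_signProb {ι : Type*} [Fintype ι] [DecidableEq ι]
    (E : (Fin N → Bool) × (ι → Bool) → Prop) :
    bernSignProb N p E = ∑ b, bernWeight N p b * signProb (fun τ => E (b, τ)) := by
  classical
  simp only [bernSignProb, signProb, signExp, Fintype.sum_prod_type, mul_sum]
  refine sum_congr rfl fun b _ => sum_congr rfl fun τ _ => ?_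
  simp only [Set.indicator_apply, Set.mem_ofPred_eq, Pi.one_apply]
  split_ifs <;> ring

theorem bernSignProb_le_add_bernProb {ι : Type*} [Fintype ι] [DecidableEq ι]
    (hp0 : 0 ≤ p) (hp1 : p ≤ 1) (E : (Fin N → Bool) × (ι → Bool) → Prop)
    (B : (Fin N → Bool) → Prop) {C : ℝ} (hC : 0 ≤ C)
    (hgood : ∀ b, ¬ B b → signProb (fun τ => E (b, τ)) ≤ C) :
    bernSignProb N p E ≤ C + bernProb N p B := by
  rw [bernSignProb_eq_sum_bernWeight_mul_signProb]
  calc ∑ b, bernWeight N p b * signProb (fun τ => E (b, τ))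
      ≤ ∑ b, (bernWeight N p b * C + {b | B b}.indicator (bernWeight N p) b) := by
        refine sum_le_sum fun b _ => ?_
        have hW := bernWeight_nonneg hp0 hp1 b
        by_cases hb : B b
        · rw [Set.indicator_of_mem (s := {b | B b}) hb]
          nlinarith [signProb_le_one (fun τ => E (b, τ))]
        · rw [Set.indicator_of_notMem (s := {b | B b}) hb, add_zero]
          exact mul_le_mul_of_nonneg_left (hgood b hb) hW
    _ = C + bernProb N p B := by
      rw [sum_add_distrib, ← sum_mul, sum_bernWeight, one_mul, bernProb]

end Bernoulli

theorem pi_sup_bound_via_wZero_general {N n₁ n₂ m : ℕ}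
    (hmN : m ≤ N)
    (Φ : Matrix (Fin N) (Fin n₁) ℂ) (Ψ : Matrix (Fin N) (Fin n₂) ℂ)
    (T₁ : Finset (Fin n₁)) (T₂ : Finset (Fin n₂))
    (lam : ℝ) (hlam : 0 < lam) :
    bernSignProb N ((m : ℝ) / N)
        (fun q : (Fin N → Bool) × ((↥T₁ ⊕ ↥T₂) → Bool) =>
          ∃ t₀ ∉ T₁.disjSum T₂,
            ‖∑ t, wZero Φ Ψ T₁ T₂ t₀ q.1 t *
              (if q.2 t then (1 : ℂ) else -1)‖ ≥ 1) ≤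
      2 * ((n₁ : ℝ) + n₂) * Real.exp (-(1 / (2 * lam ^ 2))) +
        bernProb N ((m : ℝ) / N)
          (fun b => ∃ t₀ ∉ T₁.disjSum T₂, vecNorm (wZero Φ Ψ T₁ T₂ t₀ b) ≥ lam) := by
  have hp1 : (m : ℝ) / N ≤ 1 := div_le_one_of_le₀ (by exact_mod_cast hmN) (Nat.cast_nonneg N)
  have hcard : (#(T₁.disjSum T₂)ᶜ : ℝ) ≤ n₁ + n₂ := by
    exact_mod_cast (card_le_univ _).trans (by simp)
  refine bernSignProb_le_add_bernProb (by positivity) hp1 _ _ (by positivity) fun b hb => ?_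
  push Not at hb
  calc signProb _ ≤ ∑ t₀ ∈ (T₁.disjSum T₂)ᶜ,
        signProb (fun τ => 1 ≤ ‖∑ t, wZero Φ Ψ T₁ T₂ t₀ b t * (if τ t then 1 else -1)‖) := by
        simpa only [Finset.mem_compl] using signProb_exists_le_sum (T₁.disjSum T₂)ᶜ
          fun t₀ τ => 1 ≤ ‖∑ t, wZero Φ Ψ T₁ T₂ t₀ b t * (if τ t then 1 else -1)‖
    _ ≤ ∑ _t₀ ∈ (T₁.disjSum T₂)ᶜ, 2 * exp (-(1 / (2 * lam ^ 2))) :=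
        sum_le_sum fun t₀ ht₀ =>
          signProb_one_le_norm_sum_mul_sign_le _ hlam (hb t₀ (mem_compl.1 ht₀)).le
    _ ≤ 2 * ((n₁ : ℝ) + n₂) * exp (-(1 / (2 * lam ^ 2))) := by
        rw [sum_const, nsmul_eq_mul, ← mul_assoc, mul_comm _ (2 : ℝ)]
        gcongr

/-- Hoeffding-type step: for all `λ > 0`,
`P(sup_{t ∈ T^c} |π(t)| ≥ 1) ≤ 2(n₁+n₂)e^{−1/(2λ²)} + P(sup_{t₀ ∈ T^c} ‖w⁰‖ ≥ λ)`,
where `π(t₀) = ⟨w⁰, τ⟩` for i.i.d. uniform signs `τ` independent of the Bernoulli samples. -/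
theorem pi_sup_bound_via_wZero {N n₁ n₂ m : ℕ}
    (hN : 0 < N) (hn₁ : 0 < n₁) (hn₂ : 0 < n₂) (hm : 0 < m) (hmN : m ≤ N)
    (Φ : Matrix (Fin N) (Fin n₁) ℂ) (Ψ : Matrix (Fin N) (Fin n₂) ℂ)
    (hΦ : Φᴴ * Φ = (N : ℂ) • 1) (hΨ : Ψᴴ * Ψ = (N : ℂ) • 1)
    (T₁ : Finset (Fin n₁)) (T₂ : Finset (Fin n₂))
    (lam : ℝ) (hlam : 0 < lam) :
    bernSignProb N ((m : ℝ) / N)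
        (fun q : (Fin N → Bool) × ((↥T₁ ⊕ ↥T₂) → Bool) =>
          ∃ t₀ ∉ T₁.disjSum T₂,
            ‖∑ t, wZero Φ Ψ T₁ T₂ t₀ q.1 t *
              (if q.2 t then (1 : ℂ) else -1)‖ ≥ 1) ≤
      2 * ((n₁ : ℝ) + n₂) * Real.exp (-(1 / (2 * lam ^ 2))) +
        bernProb N ((m : ℝ) / N)
          (fun b => ∃ t₀ ∉ T₁.disjSum T₂, vecNorm (wZero Φ Ψ T₁ T₂ t₀ b) ≥ lam) :=
  pi_sup_bound_via_wZero_general hmN Φ Ψ T₁ T₂ lam hlam
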